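/- arXiv:1910.14300 — 3 statements merged into one kernel-verified Lean document; each statement's English description precedes it below -/
import Mathlib

section
/- Let G be a finite group and p a prime. Then the smallest positive integer n such that G embeds into the projective general linear group PGL_n over an algebraic closure of the field with p elements is equal to the smallest positive integer n such that G embeds into PGL_n(F) for some field F of characteristic p. In particular, if G embeds into PGL_n(F) for some field F of characteristic p, then G embeds into PGL_n over the algebraic closure of the prime field of characteristic p. -/
/-!
Lift representatives in `GL_n(F)` of the images of the finitely many elements of `G` to
`GL_n(R)`, where `R ⊆ F` is the `𝔽_p`-algebra generated by their entries and the entries of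
their inverses; `G` then embeds into `PGL_n(R)`. An element of `GL_n(R)` is non-central exactly
when some entry of `A - A₀₀ • 1` is nonzero, and by the Nullstellensatz there is an
`𝔽_p`-algebra map `R → 𝔽̄_p` that keeps the finitely many such witnesses (one per `g ≠ 1`)
nonzero. Specializing along it gives an embedding `G → PGL_n(𝔽̄_p)`.
-/

open scoped MatrixGroups

abbrev PGL (n : ℕ) (F : Type*) [Field F] : Type _ :=
  GL (Fin n) F ⧸ Subgroup.center (GL (Fin n) F)

universe u v

open Function

section Nullstellensatz

variable (K L : Type*) [Field K] [Field L] [IsAlgClosed L] [Algebra K L]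
  {R : Type*} [CommRing R] [Algebra K R] [Algebra.FiniteType K R]

theorem exists_algHom_ne_zero_of_not_isNilpotent {a : R} (ha : ¬IsNilpotent a) :
    ∃ ψ : R →ₐ[K] L, ψ a ≠ 0 := by
  have : IsJacobsonRing R := isJacobsonRing_of_finiteType (A := K)
  obtain ⟨m, ⟨-, hm⟩, ham⟩ : ∃ m : Ideal R, (⊥ ≤ m ∧ m.IsMaximal) ∧ a ∉ m := by
    have : a ∉ (⊥ : Ideal R).jacobson := by
      simpa [← Ideal.radical_eq_jacobson, Ideal.mem_radical_iff, IsNilpotent] using ha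
    simpa [Ideal.jacobson, Ideal.mem_sInf] using this
  let : Field (R ⧸ m) := Ideal.Quotient.field m
  have : Algebra.FiniteType K (R ⧸ m) := .of_surjective (Ideal.Quotient.mkₐ K m)
    (Ideal.Quotient.mkₐ_surjective K m)
  have : Module.Finite K (R ⧸ m) := finite_of_finite_type_of_isJacobsonRing K (R ⧸ m)
  let φ : R ⧸ m →ₐ[K] L := IsAlgClosed.lift
  refine ⟨φ.comp (Ideal.Quotient.mkₐ K m), ?_⟩
  rw [AlgHom.comp_apply, map_ne_zero, Ideal.Quotient.mkₐ_eq_mk, Ne,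
    Ideal.Quotient.eq_zero_iff_mem]
  exact ham

theorem exists_algHom_forall_ne_zero [IsDomain R] {ι : Type*} [Finite ι] {w : ι → R}
    (hw : ∀ i, w i ≠ 0) : ∃ ψ : R →ₐ[K] L, ∀ i, ψ (w i) ≠ 0 := by
  have := Fintype.ofFinite ι
  obtain ⟨ψ, hψ⟩ := exists_algHom_ne_zero_of_not_isNilpotent K L
    (a := ∏ i, w i) fun h => Finset.prod_ne_zero_iff.2 (fun i _ => hw i) h.eq_zero
  exact ⟨ψ, by simpa [map_prod, Finset.prod_ne_zero_iff] using hψ⟩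

end Nullstellensatz

namespace Matrix

variable {n R S : Type*} [Fintype n] [DecidableEq n] [CommRing R] [CommRing S]

theorem mem_range_scalar_iff_sub_scalar_eq_zero (M : Matrix n n R) (i₀ : n) :
    M ∈ Set.range (scalar n) ↔ M - scalar n (M i₀ i₀) = 0 := by
  rw [sub_eq_zero]
  constructor
  · rintro ⟨r, rfl⟩
    simp
  · exact fun h => ⟨_, h.symm⟩

theorem map_mem_range_scalar_iff (ψ : R →+* S) (M : Matrix n n R) (i₀ : n) :
    M.map ψ ∈ Set.range (scalar n) ↔ (M - scalar n (M i₀ i₀)).map ψ = 0 := by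
  rw [mem_range_scalar_iff_sub_scalar_eq_zero _ i₀]
  congr! 1
  ext i j
  by_cases hij : i = j <;> simp [hij]

end Matrix

namespace Matrix.GeneralLinearGroup

variable {n R S : Type*} [Fintype n] [DecidableEq n] [CommRing R] [CommRing S]

theorem mem_center_of_isEmpty [IsEmpty n] (g : GL n R) : g ∈ Subgroup.center (GL n R) :=
  Subsingleton.elim g 1 ▸ Subgroup.one_mem _

theorem map_mem_center_iff (ψ : R →+* S) (g : GL n R) (i₀ : n) :
    map ψ g ∈ Subgroup.center (GL n S) ↔
      ((g : Matrix n n R) - Matrix.scalar n (g i₀ i₀)).map ψ = 0 := by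
  rw [mem_center_iff_val_mem_range_scalar]
  exact map_mem_range_scalar_iff ψ g i₀

theorem mem_center_of_map_mem_center {ψ : R →+* S} (hψ : Injective ψ) {g : GL n R}
    (hg : map ψ g ∈ Subgroup.center (GL n S)) : g ∈ Subgroup.center (GL n R) := by
  cases isEmpty_or_nonempty n with
  | inl _ => exact mem_center_of_isEmpty g
  | inr h =>
    obtain ⟨i₀⟩ := h
    rw [map_mem_center_iff ψ g i₀, ← Matrix.map_zero ψ (map_zero ψ)] at hg
    rw [mem_center_iff_val_mem_range_scalar, mem_range_scalar_iff_sub_scalar_eq_zero _ i₀]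
    exact Matrix.map_injective hψ hg

theorem exists_ne_zero_forall_map_notMem_center {g : GL n R}
    (hg : g ∉ Subgroup.center (GL n R)) :
    ∃ w : R, w ≠ 0 ∧ ∀ ψ : R →+* S, ψ w ≠ 0 → map ψ g ∉ Subgroup.center (GL n S) := by
  cases isEmpty_or_nonempty n with
  | inl _ => exact absurd (mem_center_of_isEmpty g) hg
  | inr h =>
    obtain ⟨i₀⟩ := h
    rw [mem_center_iff_val_mem_range_scalar, mem_range_scalar_iff_sub_scalar_eq_zero _ i₀] at hg
    obtain ⟨i, j, hij⟩ : ∃ i j, ((g : Matrix n n R) - Matrix.scalar n (g i₀ i₀)) i j ≠ 0 := by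
      by_contra! h
      exact hg (Matrix.ext h)
    refine ⟨_, hij, fun ψ hψ hgψ => hψ ?_⟩
    rw [map_mem_center_iff ψ g i₀] at hgψ
    exact congrFun (congrFun hgψ i) j

theorem mem_range_map_of_forall_mem_range {ι : R →+* S} (hι : Injective ι) {g : GL n S}
    (hg : ∀ i j, g i j ∈ Set.range ι) (hg' : ∀ i j, g⁻¹ i j ∈ Set.range ι) :
    g ∈ Set.range (map ι) := by
  choose M hM using hg
  choose N hN using hg'
  have hM : (of M).map ι = g := Matrix.ext hM
  have hN : (of N).map ι = (g⁻¹ : GL n S) := Matrix.ext hN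
  have hinj : Injective ι.mapMatrix := Matrix.map_injective (m := n) hι
  have hMN : of M * of N = 1 := hinj (by simp [RingHom.mapMatrix_apply, hM, hN])
  have hNM : of N * of M = 1 := hinj (by simp [RingHom.mapMatrix_apply, hM, hN])
  exact ⟨⟨of M, of N, hMN, hNM⟩, Units.ext hM⟩

theorem exists_fg_subalgebra_subset_range_map (K : Type*) [CommRing K] [Algebra K S]
    {s : Set (GL n S)} (hs : s.Finite) :
    ∃ R : Subalgebra K S, R.FG ∧ s ⊆ Set.range (map (R.val : R →+* S)) := by
  let entries : Set S := (fun q : GL n S × n × n => q.1 q.2.1 q.2.2) '' ((s ∪ s⁻¹) ×ˢ Set.univ)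
  have hfin : entries.Finite := ((hs.union hs.inv).prod Set.finite_univ).image _
  refine ⟨Algebra.adjoin K entries, ⟨hfin.toFinset, by rw [hfin.coe_toFinset]⟩, fun g hg => ?_⟩
  refine mem_range_map_of_forall_mem_range Subtype.val_injective (fun i j => ?_) fun i j => ?_
  · exact ⟨⟨_, Algebra.subset_adjoin ⟨(g, i, j), ⟨Or.inl hg, trivial⟩, rfl⟩⟩, rfl⟩
  · have hg' : g⁻¹ ∈ s ∪ s⁻¹ := Or.inr (by simpa using hg)
    exact ⟨⟨_, Algebra.subset_adjoin ⟨(g⁻¹, i, j), ⟨hg', trivial⟩, rfl⟩⟩, rfl⟩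

end Matrix.GeneralLinearGroup

namespace Matrix.ProjGenLinGroup

variable {n R S : Type*} [Fintype n] [DecidableEq n] [CommRing R] [CommRing S]

theorem map_injective {ψ : R →+* S} (hψ : Injective ψ) : Injective (map (n := n) ψ) := by
  refine (injective_iff_map_eq_one _).2 fun x hx => ?_
  induction x using induction_on with | mk g =>
  rw [map_mk, mk_eq_one] at hx
  exact mk_eq_one.2 (GeneralLinearGroup.mem_center_of_map_mem_center hψ hx)

variable {G : Type*} [Group G] [Finite G]

theorem exists_algHom_injective_map_comp (K L : Type*) [Field K] [Field L] [IsAlgClosed L]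
    [Algebra K L] [IsDomain R] [Algebra K R] [Algebra.FiniteType K R]
    {ρ : G →* PGL(n, R)} (hρ : Injective ρ) :
    ∃ ψ : R →ₐ[K] L, Injective ((map (ψ : R →+* L)).comp ρ) := by
  choose A hA using fun g => mk_surjective (ρ g)
  have hA_center (g : {g : G // g ≠ 1}) : A g ∉ Subgroup.center (GL n R) := by
    rw [← mk_eq_one, hA, ← map_one ρ]
    exact hρ.ne g.2
  choose w hw0 hw using fun g => GeneralLinearGroup.exists_ne_zero_forall_map_notMem_center
    (S := L) (hA_center g)
  obtain ⟨ψ, hψ⟩ := exists_algHom_forall_ne_zero K L hw0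
  refine ⟨ψ, (injective_iff_map_eq_one _).2 fun g hg => ?_⟩
  by_contra hg1
  refine hw ⟨g, hg1⟩ ψ (hψ _) ?_
  rw [← mk_eq_one, ← map_mk, hA]
  exact hg

theorem exists_injective_hom_of_isAlgClosed (K L : Type*) [Field K] [Field L] [IsAlgClosed L]
    [Algebra K L] {F : Type*} [Field F] [Algebra K F] {f : G →* PGL(n, F)} (hf : Injective f) :
    ∃ f' : G →* PGL(n, L), Injective f' := by
  choose A hA using fun g => mk_surjective (f g)
  obtain ⟨R, hR, hAR⟩ := GeneralLinearGroup.exists_fg_subalgebra_subset_range_map K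
    (Set.finite_range A)
  have := (Subalgebra.fg_iff_finiteType R).1 hR
  have hrange : f.range ≤ (map (R.val : R →+* F)).range := by
    rintro _ ⟨g, rfl⟩
    obtain ⟨B, hB⟩ := hAR ⟨g, rfl⟩
    exact ⟨mk B, by rw [map_mk, hB, hA]⟩
  let ρ : G →* PGL(n, R) :=
    (MonoidHom.ofInjective (map_injective Subtype.val_injective)).symm.toMonoidHom.comp
      (f.codRestrict (map (R.val : R →+* F)).range fun g => hrange ⟨g, rfl⟩)
  have hρ : Injective ρ := by
    simp only [ρ, MonoidHom.coe_comp, MulEquiv.coe_toMonoidHom]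
    exact (MulEquiv.injective _).comp ((f.injective_codRestrict _ _).2 hf)
  obtain ⟨ψ, hψ⟩ := exists_algHom_injective_map_comp K L hρ
  exact ⟨_, hψ⟩

end Matrix.ProjGenLinGroup

open Matrix.ProjGenLinGroup in
/-- For a finite group `G` and a prime `p`, the smallest positive `n` such that `G`
embeds into `PGL_n` over an algebraic closure of the field with `p` elements equals
the smallest positive `n` such that `G` embeds into `PGL_n(F)` for some field `F` of
characteristic `p`.  In particular, if `G` embeds into `PGL_n(F)` for some field `F`
of characteristic `p`, then `G` embeds into `PGL_n` over the algebraic closure of the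
prime field of characteristic `p`. -/
theorem stmt_1 (p : ℕ) (hp : p.Prime) (G : Type u) [Group G] [Finite G] :
    haveI : Fact p.Prime := ⟨hp⟩
    (sInf { n : ℕ | 0 < n ∧
        ∃ f : G →* PGL n (AlgebraicClosure (ZMod p)), Function.Injective f }
      = sInf { n : ℕ | 0 < n ∧
          ∃ (F : Type v) (iF : Field F),
            letI := iF
            CharP F p ∧ ∃ f : G →* PGL n F, Function.Injective f })
    ∧ ∀ n : ℕ,
        (∃ (F : Type v) (iF : Field F),
          letI := iF
          CharP F p ∧ ∃ f : G →* PGL n F, Function.Injective f) →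
        ∃ f : G →* PGL n (AlgebraicClosure (ZMod p)), Function.Injective f := by
  have : Fact p.Prime := ⟨hp⟩
  have descend (n : ℕ) : (∃ (F : Type v) (_ : Field F), CharP F p ∧
      ∃ f : G →* PGL n F, Injective f) →
      ∃ f : G →* PGL n (AlgebraicClosure (ZMod p)), Injective f := by
    rintro ⟨F, _, _, f, hf⟩
    let := ZMod.algebra F p
    -- `PGL n F` unfolds to Mathlib's `PGL(n, F)`.
    exact exists_injective_hom_of_isAlgClosed (ZMod p) _ hf
  have ascend (n : ℕ) : (∃ f : G →* PGL n (AlgebraicClosure (ZMod p)), Injective f) →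
      ∃ (F : Type v) (_ : Field F), CharP F p ∧ ∃ f : G →* PGL n F, Injective f := by
    rintro ⟨f, hf⟩
    let e := (ULift.ringEquiv (R := AlgebraicClosure (ZMod p))).symm.toRingHom
    exact ⟨ULift (AlgebraicClosure (ZMod p)), inferInstance, inferInstance,
      (map e).comp f, (map_injective e.injective).comp hf⟩
  exact ⟨congrArg sInf (Set.ext fun n => and_congr_right fun _ => ⟨ascend n, descend n⟩),
    descend⟩
end

section
/- Let G be a finite quasisimple group with central quotient S = G/Z(G), let p be a prime, F a field of characteristic p, and V a finite-dimensional F-vector space with dim V = R_p(S). If ρ : G → GL(V) is a representation whose image is a nontrivial group, then ρ is absolutely irreducible; that is, the base change of V to an algebraic closure of F is a simple module over the group algebra of G. -/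
/-!
Let `K` be an algebraic closure of `F`. A perfect group acting trivially on a subrepresentation
and on the corresponding quotient acts trivially, so if `K ⊗ V` were reducible, induction on the
dimension would give a nontrivial irreducible subquotient `W` with `dim W < dim V`. Schur's
lemma makes `Z(G)` act by scalars; since `G/Z(G)` is simple and `G` is perfect, the elements acting
by scalars are exactly `Z(G)`, so `G/Z(G)` embeds into `PGL_{dim W}(K)`. The finitely many matrix
entries, together with the inverses of the nonzero differences that witness non-scalarity,
generate a finitely generated `𝔽_p`-algebra; by Zariski's lemma it maps to `𝔽̄_p`, which moves the
embedding into `PGL_{dim W}(𝔽̄_p)`. Thus `R_p(G/Z(G)) ≤ dim W < dim V`, a contradiction.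
-/

open scoped MatrixGroups TensorProduct

/-- A group is quasisimple if it is perfect and its central quotient is a
non-abelian simple group. -/
def IsQuasisimple (G : Type*) [Group G] : Prop :=
  commutator G = ⊤ ∧ IsSimpleGroup (G ⧸ Subgroup.center G) ∧
    ∃ a b : G ⧸ Subgroup.center G, a * b ≠ b * a

/-- `projDim p H` is `R_p(H)`: the smallest positive `n` such that `H` embeds into
`PGL_n` over an algebraic closure of the field with `p` elements. -/
noncomputable def projDim (p : ℕ) [Fact p.Prime] (H : Type*) [Group H] : ℕ :=
  sInf { n | 0 < n ∧
    ∃ f : H →* PGL n (AlgebraicClosure (ZMod p)), Function.Injective f }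

/-- The base change of a representation of `G` on the `F`-vector space `V` to a
commutative `F`-algebra `A`. -/
noncomputable def Representation.myBaseChange {F G V : Type*} [Field F] [Group G]
    [AddCommGroup V] [Module F V] (A : Type*) [CommRing A] [Algebra F A]
    (ρ : Representation F G V) : Representation A G (A ⊗[F] V) :=
  (Module.End.baseChangeHom F A V).toRingHom.toMonoidHom.comp ρ

open Module

theorem MonoidHom.eq_one_of_commute_of_commutator_eq_top {G M : Type*} [Group G] [Monoid M]
    (hG : commutator G = ⊤) (f : G →* M) (hf : ∀ g h, Commute (f g) (f h)) : f = 1 := by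
  have hle : commutator G ≤ f.ker := by
    rw [commutator_def, Subgroup.commutator_le]
    intro g _ h _
    rw [MonoidHom.mem_ker, commutatorElement_def, map_mul, map_mul, map_mul, (hf g h).eq,
      mul_assoc (f h), ← map_mul, mul_inv_cancel, map_one, mul_one, ← map_mul, mul_inv_cancel,
      map_one]
  ext g
  exact hle (hG ▸ Subgroup.mem_top g)

theorem Subgroup.eq_or_eq_top_of_le_of_isSimpleGroup_quotient {G : Type*} [Group G]
    {H N : Subgroup G} [H.Normal] [IsSimpleGroup (G ⧸ H)] (hN : N.Normal) (hle : H ≤ N) :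
    N = H ∨ N = ⊤ := by
  refine (hN.map (QuotientGroup.mk' H) (QuotientGroup.mk'_surjective H)).eq_bot_or_eq_top.imp
    (fun hbot => le_antisymm ?_ hle) (fun htop => ?_)
  · simpa using (Subgroup.map_eq_bot_iff N).mp hbot
  · rw [← sup_eq_left.mpr hle, ← QuotientGroup.ker_mk' H, ← Subgroup.comap_map_eq, htop,
      Subgroup.comap_top]

theorem Algebra.FiniteType.nonempty_algHom_algebraicClosure (k A : Type*) [Field k] [CommRing A]
    [Nontrivial A] [Algebra k A] [Algebra.FiniteType k A] :
    Nonempty (A →ₐ[k] AlgebraicClosure k) := by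
  obtain ⟨I, hI⟩ := Ideal.exists_maximal A
  let := Ideal.Quotient.field I
  have : Algebra.FiniteType k (A ⧸ I) :=
    .of_surjective (Ideal.Quotient.mkₐ k I) Ideal.Quotient.mk_surjective
  have := finite_of_finite_type_of_isJacobsonRing k (A ⧸ I)
  have : Algebra.IsAlgebraic k (A ⧸ I) := Algebra.IsAlgebraic.of_finite k _
  exact ⟨IsAlgClosed.lift.comp (Ideal.Quotient.mkₐ k I)⟩

theorem exists_subring_ringHom_algebraicClosure_ne_zero {k K : Type*} [Field k] [Field K]
    [Algebra k K] (s : Finset K) :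
    ∃ R : Subring K, (s : Set K) ⊆ R ∧
      ∃ ψ : R →+* AlgebraicClosure k, ∀ x : R, (x : K) ∈ s → x ≠ 0 → ψ x ≠ 0 := by
  classical
  let A := Algebra.adjoin k ((s ∪ s.image (·⁻¹) : Finset K) : Set K)
  have : Algebra.FiniteType k A :=
    (Subalgebra.fg_iff_finiteType A).mp (Subalgebra.fg_adjoin_finset _)
  obtain ⟨ψ⟩ := Algebra.FiniteType.nonempty_algHom_algebraicClosure k A
  refine ⟨A.toSubring, fun x hx => Algebra.subset_adjoin (by simp [hx]), ψ.toRingHom,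
    fun x hxs hx0 => ?_⟩
  -- `x⁻¹` was adjoined, so `x` is a unit of the subring and stays nonzero under `ψ`
  have hinv : (x : K)⁻¹ ∈ A := Algebra.subset_adjoin (by simp [hxs])
  have hunit : IsUnit x := IsUnit.of_mul_eq_one (⟨(x : K)⁻¹, hinv⟩ : A.toSubring)
    (Subtype.ext (mul_inv_cancel₀ (by simpa using hx0)))
  exact (hunit.map ψ.toRingHom).ne_zero

theorem RingHom.mapMatrix_mem_range_scalar_iff {n R S : Type*} [Fintype n] [DecidableEq n]
    [Ring R] [Ring S] (f : R →+* S) (M : Matrix n n R) :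
    f.mapMatrix M ∈ Set.range (Matrix.scalar n) ↔
      ∀ i j l, f (M i j - if i = j then M l l else 0) = 0 := by
  simp only [map_sub, sub_eq_zero]
  constructor
  · rintro ⟨c, hc⟩ i j l
    have h : ∀ i j, (if i = j then c else 0) = f (M i j) := fun i j => by
      simpa [Matrix.diagonal_apply] using congr_fun₂ hc i j
    split_ifs with hij <;> simp [← h, hij]
  · intro h
    cases isEmpty_or_nonempty n
    · exact ⟨0, Subsingleton.elim _ _⟩
    obtain ⟨l⟩ := ‹Nonempty n›
    refine ⟨f (M l l), Matrix.ext fun i j => ?_⟩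
    rw [RingHom.mapMatrix_apply, Matrix.map_apply, h i j l]
    split_ifs with hij <;> simp [hij]

namespace Matrix.GeneralLinearGroup

variable {n : Type*} [Fintype n] [DecidableEq n]

theorem exists_lift_of_forall_mem {K G : Type*} [CommRing K] [Group G] (R : Subring K)
    (χ : G →* GL n K) (h : ∀ g i j, χ g i j ∈ R) :
    ∃ χR : G →* GL n R, ∀ g, map R.subtype (χR g) = χ g := by
  have hinj : Function.Injective (R.subtype.mapMatrix : Matrix n n R →+* Matrix n n K) :=
    Matrix.map_injective Subtype.val_injective
  let T : G → Matrix n n R := fun g => Matrix.of fun i j => ⟨χ g i j, h g i j⟩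
  have hT : ∀ g, R.subtype.mapMatrix (T g) = χ g := fun g => rfl
  let T' : G →* Matrix n n R :=
    { toFun := T
      map_one' := hinj (by rw [hT, map_one, map_one, Units.val_one])
      map_mul' := fun g g' => hinj (by rw [map_mul, hT, hT, hT, map_mul, Units.val_mul]) }
  exact ⟨T'.toHomUnits, fun g => Units.ext (hT g)⟩

theorem exists_algebraicClosure_comap_center_eq {k K G : Type*} [Field k] [Field K]
    [Algebra k K] [Group G] [Finite G] (χ : G →* GL n K) :
    ∃ χ' : G →* GL n (AlgebraicClosure k),
      (Subgroup.center _).comap χ' = (Subgroup.center _).comap χ := by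
  classical
  cases nonempty_fintype G
  -- `χ g` is scalar iff all its `offScalar` entries vanish, so keeping the nonzero ones nonzero
  -- under the specialisation `ψ` keeps the non-scalar `χ g` non-scalar
  let offScalar : G × n × n × n → K := fun x =>
    χ x.1 x.2.1 x.2.2.1 - if x.2.1 = x.2.2.1 then χ x.1 x.2.2.2 x.2.2.2 else 0
  let entry : G × n × n → K := fun x => χ x.1 x.2.1 x.2.2
  obtain ⟨R, hsR, ψ, hψ⟩ := exists_subring_ringHom_algebraicClosure_ne_zero (k := k)
    (Finset.univ.image offScalar ∪ Finset.univ.image entry)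
  obtain ⟨χR, hχR⟩ := exists_lift_of_forall_mem R χ fun g i j =>
    hsR (Finset.mem_union_right _ (Finset.mem_image_of_mem entry (Finset.mem_univ (g, i, j))))
  refine ⟨(map ψ).comp χR, ?_⟩
  ext g
  simp only [Subgroup.mem_comap, mem_center_iff_val_mem_range_scalar, ← hχR g,
    MonoidHom.comp_apply]
  refine (ψ.mapMatrix_mem_range_scalar_iff _).trans
    (Iff.trans (forall₃_congr fun i j l => ?_) (R.subtype.mapMatrix_mem_range_scalar_iff _).symm)
  have hoff : R.subtype ((χR g) i j - if i = j then (χR g) l l else 0) =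
      offScalar (g, i, j, l) := by
    simp only [offScalar, ← hχR g, GeneralLinearGroup.map_apply, map_sub, apply_ite R.subtype,
      map_zero]
  have hmem : R.subtype ((χR g) i j - if i = j then (χR g) l l else 0) ∈
      Finset.univ.image offScalar ∪ Finset.univ.image entry :=
    Finset.mem_union_left _ (hoff ▸ Finset.mem_image_of_mem offScalar (Finset.mem_univ _))
  rw [map_eq_zero_iff _ R.subtype_injective]
  exact ⟨not_imp_not.mp (hψ _ hmem), fun h => by rw [h, map_zero]⟩

end Matrix.GeneralLinearGroup

theorem exists_injective_quotient_center_PGL {G L : Type*} [Group G] [Field L] {n : ℕ}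
    (χ : G →* GL (Fin n) L) (hχ : (Subgroup.center _).comap χ = Subgroup.center G) :
    ∃ f : G ⧸ Subgroup.center G →* PGL n L, Function.Injective f := by
  let θ := (QuotientGroup.mk' (Subgroup.center (GL (Fin n) L))).comp χ
  have hθ : Subgroup.center G = θ.ker := by
    rw [← MonoidHom.comap_ker, QuotientGroup.ker_mk', hχ]
  exact ⟨QuotientGroup.lift _ θ hθ.le, (QuotientGroup.injective_lift_iff _ θ hθ.le).mpr hθ⟩

universe w

namespace Representation

variable {k G : Type*} [Field k] [Group G]

section

variable {V : Type*} [AddCommGroup V] [Module k V]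

theorem nontrivial_of_ne_one {ρ : Representation k G V} (hρ : ρ ≠ 1) : Nontrivial V := by
  by_contra h
  rw [not_nontrivial_iff_subsingleton] at h
  exact hρ (MonoidHom.ext fun g => Subsingleton.elim _ _)

theorem myBaseChange_ne_one (A : Type*) [CommRing A] [Nontrivial A] [Algebra k A]
    {ρ : Representation k G V} (hρ : ρ ≠ 1) : ρ.myBaseChange A ≠ 1 := by
  refine fun h => hρ (MonoidHom.ext fun g => LinearMap.baseChangeHom_injective k V A ?_)
  rw [MonoidHom.one_apply, LinearMap.baseChangeHom_apply, LinearMap.baseChangeHom_apply,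
    LinearMap.baseChange_one]
  exact DFunLike.congr_fun h g

abbrev _root_.Subrepresentation.quotientRepresentation {ρ : Representation k G V}
    (σ : Subrepresentation ρ) : Representation k G (V ⧸ σ.toSubmodule) :=
  ρ.quotient σ.toSubmodule fun g _ hv => σ.apply_mem_toSubmodule g hv

theorem eq_one_of_subrepresentation (hG : commutator G = ⊤) {ρ : Representation k G V}
    (σ : Subrepresentation ρ) (hσ : σ.toRepresentation = 1)
    (hquot : σ.quotientRepresentation = 1) : ρ = 1 := by
  have hsub : ∀ g v, ρ g v - v ∈ σ.toSubmodule := fun g v => by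
    simpa [Submodule.Quotient.eq] using
      LinearMap.congr_fun (DFunLike.congr_fun hquot g) (Submodule.Quotient.mk v)
  have hfix : ∀ g, ∀ v ∈ σ.toSubmodule, ρ g v = v := fun g v hv =>
    congr_arg Subtype.val (LinearMap.congr_fun (DFunLike.congr_fun hσ g) ⟨v, hv⟩)
  have hcomp : ∀ g h v, ρ g (ρ h v) = ρ h v - v + ρ g v := fun g h v => by
    rw [← hfix g _ (hsub h v), map_sub, sub_add_cancel]
  refine MonoidHom.eq_one_of_commute_of_commutator_eq_top hG ρ fun g h => ?_
  ext v
  simp only [Module.End.mul_apply, hcomp]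
  abel

theorem exists_subrepresentation_ne_one_finrank_lt (hG : commutator G = ⊤)
    [FiniteDimensional k V] {ρ : Representation k G V} (hρ : ρ ≠ 1)
    (hirr : ¬ ρ.IsIrreducible) :
    ∃ σ : Subrepresentation ρ,
      (σ.toRepresentation ≠ 1 ∧ finrank k σ.toSubmodule < finrank k V) ∨
      (σ.quotientRepresentation ≠ 1 ∧ finrank k (V ⧸ σ.toSubmodule) < finrank k V) := by
  have := nontrivial_of_ne_one hρ
  have : Nontrivial (Subrepresentation ρ) :=
    ⟨⊥, ⊤, fun h => bot_ne_top (congr_arg Subrepresentation.toSubmodule h)⟩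
  obtain ⟨σ, hbot, htop⟩ : ∃ σ : Subrepresentation ρ, σ ≠ ⊥ ∧ σ ≠ ⊤ := by
    by_contra! h
    exact hirr ⟨fun σ => or_iff_not_imp_left.mpr (h σ)⟩
  refine ⟨σ, ?_⟩
  by_cases hσ : σ.toRepresentation = 1
  · refine .inr ⟨fun hquot => hρ (eq_one_of_subrepresentation hG σ hσ hquot), ?_⟩
    have hpos : 0 < finrank k σ.toSubmodule :=
      Nat.pos_of_ne_zero fun h =>
        hbot (Subrepresentation.toSubmodule_injective (Submodule.finrank_eq_zero.mp h))
    have := Submodule.finrank_quotient_add_finrank σ.toSubmodule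
    omega
  · exact .inl ⟨hσ, Submodule.finrank_lt fun h =>
      htop (Subrepresentation.toSubmodule_injective h)⟩

theorem IsIrreducible.exists_eq_smul_one_of_mem_center [IsAlgClosed k] [FiniteDimensional k V]
    {ρ : Representation k G V} [ρ.IsIrreducible] {z : G} (hz : z ∈ Subgroup.center G) :
    ∃ c : k, ρ z = c • 1 := by
  let φ : IntertwiningMap ρ ρ :=
    { toLinearMap := ρ z
      isIntertwining' g := by
        rw [← Module.End.mul_eq_comp, ← Module.End.mul_eq_comp, ← map_mul, ← map_mul,
          Subgroup.mem_center_iff.mp hz g] }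
  obtain ⟨c, hc⟩ := algebraMap_intertwiningMap_bijective_of_isAlgClosed.2 φ
  exact ⟨c, congr_arg IntertwiningMap.toLinearMap hc.symm⟩

theorem IsIrreducible.comap_center_asGroupHom [IsAlgClosed k] [FiniteDimensional k V]
    (hG : IsQuasisimple G) {ρ : Representation k G V} [ρ.IsIrreducible] (hρ : ρ ≠ 1) :
    (Subgroup.center (V →ₗ[k] V)ˣ).comap ρ.asGroupHom = Subgroup.center G := by
  have : IsSimpleGroup (G ⧸ Subgroup.center G) := hG.2.1
  have hle : Subgroup.center G ≤ (Subgroup.center (V →ₗ[k] V)ˣ).comap ρ.asGroupHom := by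
    intro z hz
    obtain ⟨c, hc⟩ := exists_eq_smul_one_of_mem_center (ρ := ρ) hz
    refine Subgroup.mem_center_iff.mpr fun u => Units.ext ?_
    simp [asGroupHom_apply, hc]
  refine (Subgroup.eq_or_eq_top_of_le_of_isSimpleGroup_quotient (Subgroup.normal_comap _)
    hle).resolve_right fun htop => ?_
  refine hρ (MonoidHom.eq_one_of_commute_of_commutator_eq_top hG.1 ρ fun g h => ?_)
  have hg : g ∈ (Subgroup.center (V →ₗ[k] V)ˣ).comap ρ.asGroupHom :=
    htop ▸ Subgroup.mem_top g
  exact congr_arg Units.val (Subgroup.mem_center_iff.mp hg (ρ.asGroupHom h)).symm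

theorem IsIrreducible.projDim_le_finrank (p : ℕ) [Fact p.Prime] [IsAlgClosed k] [CharP k p]
    [Finite G] [FiniteDimensional k V] (hG : IsQuasisimple G) {ρ : Representation k G V}
    [ρ.IsIrreducible] (hρ : ρ ≠ 1) : projDim p (G ⧸ Subgroup.center G) ≤ finrank k V := by
  let := ZMod.algebra k p
  have := nontrivial_of_ne_one hρ
  let e : (V →ₗ[k] V)ˣ ≃* GL (Fin (finrank k V)) k :=
    Units.mapEquiv (LinearMap.toMatrixAlgEquiv (finBasis k V)).toMulEquiv
  have hχ : (Subgroup.center _).comap (e.toMonoidHom.comp ρ.asGroupHom) = Subgroup.center G := by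
    rw [← comap_center_asGroupHom hG hρ]
    ext g
    exact MulEquivClass.apply_mem_center_iff e
  obtain ⟨χ', hχ'⟩ := Matrix.GeneralLinearGroup.exists_algebraicClosure_comap_center_eq
    (k := ZMod p) (e.toMonoidHom.comp ρ.asGroupHom)
  obtain ⟨f, hf⟩ := exists_injective_quotient_center_PGL χ' (hχ'.trans hχ)
  exact Nat.sInf_le ⟨finrank_pos, f, hf⟩

end

theorem le_finrank_of_ne_one {d : ℕ} (hG : commutator G = ⊤)
    (hd : ∀ (W : Type w) [AddCommGroup W] [Module k W] [FiniteDimensional k W]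
      (σ : Representation k G W), σ.IsIrreducible → σ ≠ 1 → d ≤ finrank k W)
    {V : Type w} [AddCommGroup V] [Module k V] [FiniteDimensional k V]
    (ρ : Representation k G V) (hρ : ρ ≠ 1) : d ≤ finrank k V := by
  induction hn : finrank k V using Nat.strong_induction_on generalizing V with
  | _ n ih =>
    by_cases hirr : ρ.IsIrreducible
    · exact hn ▸ hd V ρ hirr hρ
    obtain ⟨σ, ⟨hσ, hlt⟩ | ⟨hσ, hlt⟩⟩ :=
      exists_subrepresentation_ne_one_finrank_lt hG hρ hirr
    · exact (ih _ (hn ▸ hlt) σ.toRepresentation hσ rfl).trans (hn ▸ hlt).le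
    · exact (ih _ (hn ▸ hlt) σ.quotientRepresentation hσ rfl).trans (hn ▸ hlt).le

theorem lt_finrank_of_not_isIrreducible {d : ℕ} (hG : commutator G = ⊤)
    (hd : ∀ (W : Type w) [AddCommGroup W] [Module k W] [FiniteDimensional k W]
      (σ : Representation k G W), σ.IsIrreducible → σ ≠ 1 → d ≤ finrank k W)
    {V : Type w} [AddCommGroup V] [Module k V] [FiniteDimensional k V]
    (ρ : Representation k G V) (hρ : ρ ≠ 1) (hirr : ¬ ρ.IsIrreducible) :
    d < finrank k V := by
  obtain ⟨σ, ⟨hσ, hlt⟩ | ⟨hσ, hlt⟩⟩ :=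
    exists_subrepresentation_ne_one_finrank_lt hG hρ hirr
  · exact (le_finrank_of_ne_one hG hd σ.toRepresentation hσ).trans_lt hlt
  · exact (le_finrank_of_ne_one hG hd σ.quotientRepresentation hσ).trans_lt hlt

end Representation

/-- If `G` is a finite quasisimple group with central quotient `S`, `F` is a field of
characteristic `p`, and `ρ : G → GL(V)` is a representation with nontrivial image of
degree `R_p(S)`, then `ρ` is absolutely irreducible: the base change of `V` to an
algebraic closure of `F` is a simple module over the group algebra of `G`. -/
theorem stmt_2 (p : ℕ) [Fact p.Prime] (G : Type*) [Group G] [Finite G]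
    (hG : IsQuasisimple G)
    (F : Type*) [Field F] [CharP F p]
    (V : Type*) [AddCommGroup V] [Module F V] [FiniteDimensional F V]
    (hdim : Module.finrank F V = projDim p (G ⧸ Subgroup.center G))
    (ρ : Representation F G V)
    (hnontriv : ∃ g : G, ρ g ≠ 1) :
    IsSimpleModule (MonoidAlgebra (AlgebraicClosure F) G)
      (ρ.myBaseChange (AlgebraicClosure F)).asModule := by
  have hρ : ρ ≠ 1 := fun h => hnontriv.elim fun g hg => hg (by rw [h, MonoidHom.one_apply])
  rw [← Representation.irreducible_iff_isSimpleModule_asModule]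
  by_contra hirr
  have hlt := Representation.lt_finrank_of_not_isIrreducible hG.1
    (fun _ _ _ _ σ _ hσ => Representation.IsIrreducible.projDim_le_finrank p hG (ρ := σ) hσ) _
    (Representation.myBaseChange_ne_one _ hρ) hirr
  rw [Module.finrank_baseChange, hdim] at hlt
  exact lt_irrefl _ hlt
end

section
/- Let S be a finite non-abelian simple group and let U be a proper subgroup of S. Then R(S) < [S : U], where [S : U] denotes the index of U in S. -/
open scoped MatrixGroups

/-- `projDimMin H` is `R(H)`: the minimum of `R_p(H)` over all primes `p`. -/
noncomputable def projDimMin (H : Type*) [Group H] : ℕ :=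
  sInf { m | ∃ (p : ℕ) (hp : p.Prime), m = @projDim p ⟨hp⟩ H _ }

/-! The group `S` acts on the `n = [S : U]` cosets of `U`; the kernel is a normal subgroup
contained in `U`, hence trivial, so `S` embeds in `Sym(n)`. A subgroup of index `2` would be
normal, so `n ≥ 3`. For `n ≥ 3` the permutation module `kⁿ` modulo the constant functions is a
faithful `(n - 1)`-dimensional representation of `Sym(n)` over any field `k`. Finally
`S → GL_{n-1} → PGL_{n-1}` is still injective: its kernel is normal, and if it were all of `S`
the image of `S` in `GL_{n-1}` would be central, making `S` abelian. Hence
`R(S) ≤ R_2(S) ≤ n - 1`. -/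

open Function

namespace Representation

variable {k G V : Type*} [Field k] [Group G] [AddCommGroup V] [Module k V]

theorem exists_injective_monoidHom_GL [FiniteDimensional k V] (ρ : Representation k G V)
    (hρ : Injective ρ) : ∃ f : G →* GL (Fin (Module.finrank k V)) k, Injective f := by
  refine ⟨(Matrix.GeneralLinearGroup.toLin' (Module.finBasis k V)).symm.toMonoidHom.comp
    ρ.asGroupHom, fun g h hgh => hρ ?_⟩
  simp only [MonoidHom.comp_apply, MulEquiv.coe_toMonoidHom, EmbeddingLike.apply_eq_iff_eq] at hgh
  simpa only [asGroupHom_apply] using congrArg Units.val hgh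

end Representation

section PermutationRepresentation

variable (k α : Type*) [Field k]

def permRep : Representation k (Equiv.Perm α) (α → k) where
  toFun σ := LinearMap.funLeft k k σ.symm
  map_one' := rfl
  map_mul' _ _ := rfl

variable {k α}

@[simp]
theorem permRep_apply (σ : Equiv.Perm α) (v : α → k) (a : α) :
    permRep k α σ v a = v (σ.symm a) := rfl

theorem permRep_single [DecidableEq α] (σ : Equiv.Perm α) (a : α) :
    permRep k α σ (Pi.single a 1) = Pi.single (σ a) 1 := by
  ext b
  simp [Pi.single_apply, Equiv.eq_symm_apply, eq_comm]

variable (k α)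

abbrev constFuns : Submodule k (α → k) := Submodule.span k {1}

theorem constFuns_le_comap_permRep (σ : Equiv.Perm α) :
    constFuns k α ≤ (constFuns k α).comap (permRep k α σ) := by
  rw [Submodule.span_le, Set.singleton_subset_iff]
  exact Submodule.subset_span (by ext; rfl)

-- The standard representation of the symmetric group.
def stdRep : Representation k (Equiv.Perm α) ((α → k) ⧸ constFuns k α) :=
  (permRep k α).quotient _ (constFuns_le_comap_permRep k α)

variable {k α}

theorem eq_of_single_sub_single_mem_constFuns [DecidableEq α] (h3 : 3 ≤ ENat.card α) {a b : α}
    (h : Pi.single a 1 - Pi.single b 1 ∈ constFuns k α) : a = b := by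
  by_contra hab
  obtain ⟨c, hca, hcb⟩ := ENat.exists_ne_ne_of_three_le h3 a b
  obtain ⟨r, hr⟩ := Submodule.mem_span_singleton.mp h
  have hr0 : r = 0 := by simpa [hca, hcb] using congrFun hr c
  simpa [hr0, hab] using congrFun hr a

theorem stdRep_injective (h3 : 3 ≤ ENat.card α) : Injective (stdRep k α) := by
  classical
  rw [injective_iff_map_eq_one]
  intro σ hσ
  ext a
  have := congrArg (· (Submodule.Quotient.mk (Pi.single a 1))) hσ
  simp only [stdRep, Representation.quotient_apply, Submodule.mapQ_apply, permRep_single] at this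
  exact eq_of_single_sub_single_mem_constFuns h3 ((Submodule.Quotient.eq _).mp this)

theorem finrank_stdRep [Finite α] [Nonempty α] :
    Module.finrank k ((α → k) ⧸ constFuns k α) = Nat.card α - 1 := by
  have := Fintype.ofFinite α
  have := (constFuns k α).finrank_quotient_add_finrank
  rw [finrank_span_singleton one_ne_zero, Module.finrank_pi, ← Nat.card_eq_fintype_card] at this
  omega

variable (k)

theorem Equiv.Perm.exists_injective_monoidHom_GL [Finite α] (h3 : 3 ≤ Nat.card α) :
    ∃ f : Equiv.Perm α →* GL (Fin (Nat.card α - 1)) k, Injective f := by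
  have : Nonempty α := Nat.card_pos_iff.mp (by omega) |>.1
  rw [← finrank_stdRep (k := k)]
  refine (stdRep k α).exists_injective_monoidHom_GL (stdRep_injective ?_)
  rw [ENat.card_eq_coe_natCard]
  exact_mod_cast h3

end PermutationRepresentation

section SimpleGroup

variable {G : Type*} [Group G] [IsSimpleGroup G]

theorem IsSimpleGroup.injective_toPermHom {H : Subgroup G} (hH : H ≠ ⊤) :
    Injective (MulAction.toPermHom G (G ⧸ H)) := by
  rw [← MonoidHom.ker_eq_bot_iff, ← Subgroup.normalCore_eq_ker]
  refine (Subgroup.normalCore_normal H).eq_bot_or_eq_top.resolve_right fun htop => hH ?_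
  exact top_le_iff.mp (htop ▸ H.normalCore_le)

theorem IsSimpleGroup.three_le_index [Finite G] (hG : ∃ a b : G, a * b ≠ b * a)
    {H : Subgroup G} (hH : H ≠ ⊤) : 3 ≤ H.index := by
  have h0 : H.index ≠ 0 := Subgroup.index_ne_zero_of_finite
  have h1 : H.index ≠ 1 := mt Subgroup.index_eq_one.mp hH
  suffices H.index ≠ 2 by omega
  intro h2
  obtain ⟨a, b, hab⟩ := hG
  rcases (Subgroup.normal_of_index_eq_two h2).eq_bot_or_eq_top with rfl | rfl
  · have : Fact (Nat.Prime 2) := ⟨Nat.prime_two⟩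
    have : IsCyclic G := isCyclic_of_prime_card (p := 2) (by rwa [← Subgroup.index_bot])
    exact hab (IsCyclic.commGroup.mul_comm a b)
  · exact hH rfl

theorem IsSimpleGroup.injective_mk'_center_comp {K : Type*} [Group K]
    (hG : ∃ a b : G, a * b ≠ b * a) {f : G →* K} (hf : Injective f) :
    Injective ((QuotientGroup.mk' (Subgroup.center K)).comp f) := by
  rw [← MonoidHom.ker_eq_bot_iff]
  refine (MonoidHom.normal_ker _).eq_bot_or_eq_top.resolve_right fun htop => ?_
  have hcentral (g : G) : f g ∈ Subgroup.center K := by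
    simpa [QuotientGroup.eq_one_iff] using htop.ge (Subgroup.mem_top g)
  obtain ⟨a, b, hab⟩ := hG
  exact hab (hf (by simp only [map_mul, (Subgroup.mem_center_iff.mp (hcentral b) (f a))]))

end SimpleGroup

theorem projDimMin_le_of_injective {H : Type*} [Group H] (p : ℕ) [Fact p.Prime] {n : ℕ}
    (hn : 0 < n) {f : H →* PGL n (AlgebraicClosure (ZMod p))} (hf : Injective f) :
    projDimMin H ≤ n := by
  have hmin : projDimMin H ≤ projDim p H := Nat.sInf_le ⟨p, Fact.out, rfl⟩
  exact hmin.trans (Nat.sInf_le ⟨hn, f, hf⟩)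

/-- If `S` is a finite non-abelian simple group and `U` a proper subgroup of `S`,
then `R(S) < [S : U]`. -/
theorem stmt_3 (S : Type*) [Group S] [Finite S] [IsSimpleGroup S]
    (hnonab : ∃ a b : S, a * b ≠ b * a)
    (U : Subgroup S) (hU : U ≠ ⊤) :
    projDimMin S < U.index := by
  have h3 : 3 ≤ U.index := IsSimpleGroup.three_le_index hnonab hU
  have : Fact (Nat.Prime 2) := ⟨Nat.prime_two⟩
  obtain ⟨f, hf⟩ :=
    Equiv.Perm.exists_injective_monoidHom_GL (AlgebraicClosure (ZMod 2)) (α := S ⧸ U) h3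
  have hS := IsSimpleGroup.injective_mk'_center_comp hnonab
    (f := f.comp (MulAction.toPermHom S (S ⧸ U))) (hf.comp (IsSimpleGroup.injective_toPermHom hU))
  calc projDimMin S ≤ U.index - 1 := projDimMin_le_of_injective 2 (by omega) hS
    _ < U.index := by omega
end
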